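/- Let p ≥ 1 and let G be a graph in W_p with α(G) > 1. Then for every vertex x of G, the localization G_x = G − N_G[x] also belongs to W_p. Moreover, if S is an independent set of G with |S| < α(G), then G_S belongs to W_p; and if p ≥ 2, then G_S has no isolated vertices. -/

import Mathlib

/-!
Let `S` be independent and let `A₁, …, A_p` be disjoint independent sets of `G_S`. Enlarge them
one at a time: to enlarge `A_k`, replace it by `A_k ∪ S`, extend the whole family in `G` to
disjoint maximum independent sets `L₁, …, L_p`, and keep `L_k \ S`. This set lies in `G_S`, has
size `α(G) - |S|`, and is disjoint from every other `A_j ⊆ L_j`. Since an independent set of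
`G_S` together with `S` is independent in `G`, `α(G_S) = α(G) - |S|`, so the enlarged family
witnesses `G_S ∈ W_p`; nonemptiness of its members (`|S| < α(G)`) gives `p ≤ |V(G_S)|`.
An isolated vertex `v` of a graph in `W_p`, `p ≥ 2`, is impossible: extending `{v}` and `∅`
gives a maximum independent set avoiding `v`, to which `v` could be added.
-/

open Classical

noncomputable section

variable {V : Type*}

/-- `s` is an independent set of `G`. -/
def IndepSet (G : SimpleGraph V) (s : Set V) : Prop :=
  ∀ ⦃a⦄, a ∈ s → ∀ ⦃b⦄, b ∈ s → ¬ G.Adj a b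

/-- The independence number `α(G)`. -/
def alphaNum [Fintype V] (G : SimpleGraph V) : ℕ :=
  sSup {n | ∃ s : Set V, IndepSet G s ∧ s.ncard = n}

/-- `s` is a maximal independent set of `G`. -/
def MaximalIndep (G : SimpleGraph V) (s : Set V) : Prop :=
  IndepSet G s ∧ ∀ t : Set V, IndepSet G t → s ⊆ t → s = t

/-- `G` is well-covered: all maximal independent sets have cardinality `α(G)`. -/
def WellCovered [Fintype V] (G : SimpleGraph V) : Prop :=
  ∀ s : Set V, MaximalIndep G s → s.ncard = alphaNum G

/-- The open neighborhood `N_G(S)` of a set of vertices. -/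
def openNbhd (G : SimpleGraph V) (S : Set V) : Set V :=
  {v | v ∉ S ∧ ∃ u ∈ S, G.Adj u v}

/-- The closed neighborhood `N_G[S]`. -/
def closedNbhd (G : SimpleGraph V) (S : Set V) : Set V :=
  S ∪ openNbhd G S

/-- The vertex set of the localization `G_S = G - N_G[S]`. -/
def localSet (G : SimpleGraph V) (S : Set V) : Set V :=
  (closedNbhd G S)ᶜ

/-- `G` belongs to the class `W_p`. -/
def Wp (p : ℕ) [Fintype V] (G : SimpleGraph V) : Prop :=
  p ≤ Fintype.card V ∧
    ∀ A : Fin p → Set V,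
      (∀ i, IndepSet G (A i)) →
      (∀ i j, i ≠ j → Disjoint (A i) (A j)) →
      ∃ S : Fin p → Set V,
        (∀ i j, i ≠ j → Disjoint (S i) (S j)) ∧
        (∀ i, IndepSet G (S i) ∧ (S i).ncard = alphaNum G) ∧
        (∀ i, A i ⊆ S i)

/-- `G` is `α`-critical: deleting any edge increases the independence number. -/
def AlphaCritical [Fintype V] (G : SimpleGraph V) : Prop :=
  ∀ a b : V, G.Adj a b → alphaNum G < alphaNum (G.deleteEdges {s(a, b)})

/-- The vertex set of `G_{ab} = G - (N_G(a) ∪ N_G(b))`. -/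
def edgeLocalSet (G : SimpleGraph V) (a b : V) : Set V :=
  (G.neighborSet a ∪ G.neighborSet b)ᶜ

section

variable {G : SimpleGraph V}

lemma IndepSet.mono {s t : Set V} (hs : IndepSet G s) (hts : t ⊆ s) : IndepSet G t :=
  fun _ ha _ hb => hs (hts ha) (hts hb)

lemma indepSet_empty : IndepSet G ∅ := fun _ ha => ha.elim

lemma indepSet_singleton (v : V) : IndepSet G {v} := by
  rintro a rfl b rfl
  exact G.irrefl

lemma IndepSet.insert {s : Set V} {v : V} (hs : IndepSet G s) (hv : ∀ u, ¬ G.Adj v u) :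
    IndepSet G (insert v s) := by
  rintro a (rfl | ha) b (rfl | hb)
  · exact hv _
  · exact hv _
  · exact fun h => hv a h.symm
  · exact hs ha hb

lemma IndepSet.image_val {U : Set V} {t : Set U} (ht : IndepSet (G.induce U) t) :
    IndepSet G (Subtype.val '' t) := by
  rintro _ ⟨a, ha, rfl⟩ _ ⟨b, hb, rfl⟩
  exact ht ha hb

lemma IndepSet.preimage_val {U s : Set V} (hs : IndepSet G s) :
    IndepSet (G.induce U) (Subtype.val ⁻¹' s) :=
  fun _ ha _ hb => hs ha hb

section Fintype

variable [Fintype V]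

lemma bddAbove_indepSet_ncard : BddAbove {n | ∃ s : Set V, IndepSet G s ∧ s.ncard = n} :=
  ⟨Fintype.card V, by
    rintro _ ⟨s, -, rfl⟩
    simpa [Set.ncard_univ] using Set.ncard_le_ncard (Set.subset_univ s)⟩

lemma IndepSet.ncard_le_alphaNum {s : Set V} (hs : IndepSet G s) : s.ncard ≤ alphaNum G :=
  le_csSup bddAbove_indepSet_ncard ⟨s, hs, rfl⟩

lemma alphaNum_le_of_forall {m : ℕ} (h : ∀ s : Set V, IndepSet G s → s.ncard ≤ m) :
    alphaNum G ≤ m :=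
  csSup_le ⟨0, ∅, indepSet_empty, Set.ncard_empty V⟩ (by rintro _ ⟨s, hs, rfl⟩; exact h s hs)

end Fintype

variable {S : Set V}

lemma mem_localSet {v : V} : v ∈ localSet G S ↔ v ∉ S ∧ ∀ u ∈ S, ¬ G.Adj u v := by
  simp only [localSet, closedNbhd, openNbhd, Set.mem_compl_iff, Set.mem_union, Set.mem_ofPred_eq,
    not_or, not_and, not_exists]
  tauto

lemma disjoint_of_subset_localSet {T : Set V} (hT : T ⊆ localSet G S) : Disjoint S T :=
  Set.disjoint_right.2 fun _ hv => (mem_localSet.1 (hT hv)).1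

lemma IndepSet.union_of_subset_localSet {T : Set V} (hS : IndepSet G S) (hT : IndepSet G T)
    (hTS : T ⊆ localSet G S) : IndepSet G (S ∪ T) := by
  rintro a (ha | ha) b (hb | hb)
  · exact hS ha hb
  · exact (mem_localSet.1 (hTS hb)).2 a ha
  · exact fun h => (mem_localSet.1 (hTS ha)).2 b hb h.symm
  · exact hT ha hb

lemma IndepSet.sdiff_subset_localSet {L : Set V} (hL : IndepSet G L) (hSL : S ⊆ L) :
    L \ S ⊆ localSet G S :=
  fun _ hv => mem_localSet.2 ⟨hv.2, fun _ hu => hL (hSL hu) hv.1⟩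

end

section

open Function

lemma Pairwise.disjoint_update {ι α : Type*} [DecidableEq ι] [PartialOrder α] [OrderBot α]
    {M : ι → α} (hM : Pairwise (Disjoint on M)) {κ : ι} {T : α}
    (hT : ∀ j ≠ κ, Disjoint T (M j)) : Pairwise (Disjoint on update M κ T) := by
  intro i j hij
  rcases eq_or_ne i κ with rfl | hi
  · simpa [onFun, update_of_ne hij.symm] using hT j hij.symm
  rcases eq_or_ne j κ with rfl | hj
  · simpa [onFun, update_of_ne hi] using (hT i hi).symm
  simpa [onFun, update_of_ne hi, update_of_ne hj] using hM hij

lemma Fintype.card_le_of_pairwise_disjoint {ι α : Type*} [Fintype ι] [Fintype α] {s : ι → Set α}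
    (hs : Pairwise (Disjoint on s)) (hne : ∀ i, (s i).Nonempty) :
    Fintype.card ι ≤ Fintype.card α := by
  choose f hf using hne
  exact Fintype.card_le_of_injective f fun i j hij =>
    hs.eq (Set.not_disjoint_iff.2 ⟨f i, hf i, hij ▸ hf j⟩)

variable [Fintype V] {G : SimpleGraph V} {p : ℕ} {S : Set V}

lemma Wp.exists_enlarge_in_localSet (hG : Wp p G) (hS : IndepSet G S) {M : Fin p → Set V}
    (hMd : Pairwise (Disjoint on M)) (hM : ∀ i, M i ⊆ localSet G S ∧ IndepSet G (M i))
    (κ : Fin p) :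
    ∃ T, M κ ⊆ T ∧ T ⊆ localSet G S ∧ IndepSet G T ∧ T.ncard = alphaNum G - S.ncard ∧
      ∀ j ≠ κ, Disjoint T (M j) := by
  have hSM : ∀ j, Disjoint S (M j) := fun j => disjoint_of_subset_localSet (hM j).1
  obtain ⟨L, hLd, hL, hBL⟩ := hG.2 (update M κ (S ∪ M κ))
    ((forall_update_iff M fun _ B => IndepSet G B).2
      ⟨hS.union_of_subset_localSet (hM κ).2 (hM κ).1, fun j _ => (hM j).2⟩)
    (hMd.disjoint_update fun j hj => Disjoint.union_left (hSM j) (hMd hj.symm))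
  have hSL : S ∪ M κ ⊆ L κ := by simpa using hBL κ
  refine ⟨L κ \ S, Set.subset_sdiff.2 ⟨Set.subset_union_right.trans hSL, (hSM κ).symm⟩,
    (hL κ).1.sdiff_subset_localSet (Set.subset_union_left.trans hSL),
    (hL κ).1.mono Set.sdiff_subset, ?_, fun j hj => ?_⟩
  · rw [Set.ncard_sdiff (Set.subset_union_left.trans hSL), (hL κ).2]
  · have hMj : M j ⊆ L j := by simpa [update_of_ne hj] using hBL j
    exact (hLd κ j hj.symm).mono Set.sdiff_subset hMj

lemma Wp.exists_extension_in_localSet (hG : Wp p G) (hS : IndepSet G S) {A : Fin p → Set V}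
    (hAd : Pairwise (Disjoint on A)) (hA : ∀ i, A i ⊆ localSet G S ∧ IndepSet G (A i)) :
    ∃ M : Fin p → Set V, Pairwise (Disjoint on M) ∧
      (∀ i, M i ⊆ localSet G S ∧ IndepSet G (M i) ∧ (M i).ncard = alphaNum G - S.ncard) ∧
      ∀ i, A i ⊆ M i := by
  suffices h : ∀ F : Finset (Fin p), ∃ M : Fin p → Set V, Pairwise (Disjoint on M) ∧
      (∀ i, M i ⊆ localSet G S ∧ IndepSet G (M i)) ∧ (∀ i, A i ⊆ M i) ∧
      ∀ i ∈ F, (M i).ncard = alphaNum G - S.ncard by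
    obtain ⟨M, hMd, hM, hAM, hcard⟩ := h Finset.univ
    exact ⟨M, hMd, fun i => ⟨(hM i).1, (hM i).2, hcard i (Finset.mem_univ i)⟩, hAM⟩
  intro F
  induction F using Finset.induction_on with
  | empty => exact ⟨A, hAd, hA, fun _ => subset_rfl, by simp⟩
  | insert κ F _ ih =>
    obtain ⟨M, hMd, hM, hAM, hcard⟩ := ih
    obtain ⟨T, hMT, hTS, hT, hTcard, hTd⟩ := hG.exists_enlarge_in_localSet hS hMd hM κ
    refine ⟨update M κ T, hMd.disjoint_update hTd,
      (forall_update_iff M fun _ B => B ⊆ localSet G S ∧ IndepSet G B).2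
        ⟨⟨hTS, hT⟩, fun j _ => hM j⟩,
      (forall_update_iff M fun i B => A i ⊆ B).2 ⟨(hAM κ).trans hMT, fun j _ => hAM j⟩,
      (forall_update_iff M fun i B => i ∈ insert κ F → B.ncard = alphaNum G - S.ncard).2
        ⟨fun _ => hTcard, fun j hj hjF => hcard j (Finset.mem_of_mem_insert_of_ne hjF hj)⟩⟩

lemma IndepSet.ncard_add_ncard_le_alphaNum (hS : IndepSet G S) {t : Set (localSet G S)}
    (ht : IndepSet (G.induce (localSet G S)) t) : S.ncard + t.ncard ≤ alphaNum G := by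
  have htS : Subtype.val '' t ⊆ localSet G S := Subtype.coe_image_subset _ t
  have hcard : (S ∪ Subtype.val '' t).ncard = S.ncard + t.ncard := by
    rw [Set.ncard_union_eq (disjoint_of_subset_localSet htS),
      Set.ncard_image_of_injective _ Subtype.val_injective]
  exact hcard ▸ (hS.union_of_subset_localSet ht.image_val htS).ncard_le_alphaNum

lemma Wp.exists_extension_induce_localSet (hG : Wp p G) (hS : IndepSet G S)
    {A : Fin p → Set (localSet G S)} (hAd : Pairwise (Disjoint on A))
    (hA : ∀ i, IndepSet (G.induce (localSet G S)) (A i)) :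
    ∃ T : Fin p → Set (localSet G S), Pairwise (Disjoint on T) ∧
      (∀ i, IndepSet (G.induce (localSet G S)) (T i) ∧ (T i).ncard = alphaNum G - S.ncard) ∧
      ∀ i, A i ⊆ T i := by
  obtain ⟨M, hMd, hM, hAM⟩ := hG.exists_extension_in_localSet hS (A := fun i => Subtype.val '' A i)
    (fun i j hij => Set.disjoint_image_of_injective Subtype.val_injective (hAd hij))
    (fun i => ⟨Subtype.coe_image_subset _ _, (hA i).image_val⟩)
  refine ⟨fun i => Subtype.val ⁻¹' M i, fun i j hij => (hMd hij).preimage _,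
    fun i => ⟨(hM i).2.1.preimage_val, ?_⟩, fun i => Set.image_subset_iff.1 (hAM i)⟩
  rw [Set.ncard_preimage_of_injective_subset_range Subtype.val_injective
    (by simpa using (hM i).1), (hM i).2.2]

lemma Wp.alphaNum_induce_localSet (hp : 1 ≤ p) (hG : Wp p G) (hS : IndepSet G S) :
    alphaNum (G.induce (localSet G S)) = alphaNum G - S.ncard := by
  refine le_antisymm (alphaNum_le_of_forall fun t ht => ?_) ?_
  · have := hS.ncard_add_ncard_le_alphaNum ht
    omega
  · obtain ⟨T, -, hT, -⟩ := hG.exists_extension_induce_localSet hS (A := fun _ => ∅)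
      (fun _ _ _ => disjoint_bot_left) fun _ => indepSet_empty
    exact (hT ⟨0, hp⟩).2 ▸ (hT ⟨0, hp⟩).1.ncard_le_alphaNum

lemma Wp.induce_localSet (hp : 1 ≤ p) (hG : Wp p G) (hS : IndepSet G S)
    (hSα : S.ncard < alphaNum G) : Wp p (G.induce (localSet G S)) := by
  refine ⟨?_, fun A hA hAd => ?_⟩
  · obtain ⟨T, hTd, hT, -⟩ := hG.exists_extension_induce_localSet hS (A := fun _ => ∅)
      (fun _ _ _ => disjoint_bot_left) fun _ => indepSet_empty
    simpa using Fintype.card_le_of_pairwise_disjoint hTd fun i =>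
      Set.nonempty_of_ncard_ne_zero (by rw [(hT i).2]; omega)
  · rw [hG.alphaNum_induce_localSet hp hS]
    exact hG.exists_extension_induce_localSet hS hAd hA

lemma Wp.exists_adj (hp : 2 ≤ p) (hG : Wp p G) (v : V) : ∃ u, G.Adj v u := by
  by_contra! hv
  let i₀ : Fin p := ⟨0, by omega⟩
  let i₁ : Fin p := ⟨1, by omega⟩
  obtain ⟨T, hTd, hT, hAT⟩ := hG.2 (update (fun _ => ∅) i₀ {v})
    ((forall_update_iff _ fun _ B => IndepSet G B).2
      ⟨indepSet_singleton v, fun _ _ => indepSet_empty⟩)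
    (Pairwise.disjoint_update (fun _ _ _ => disjoint_bot_left) fun _ _ => Set.disjoint_empty _)
  have hv₀ : v ∈ T i₀ := hAT i₀ (by simp)
  have hv₁ : v ∉ T i₁ := Set.disjoint_left.1 (hTd i₀ i₁ (by simp [i₀, i₁, Fin.ext_iff])) hv₀
  have := ((hT i₁).1.insert hv).ncard_le_alphaNum
  rw [Set.ncard_insert_of_notMem hv₁, (hT i₁).2] at this
  omega

end

theorem stmt16 [Fintype V] (G : SimpleGraph V) (p : ℕ) (hp : 1 ≤ p)
    (hG : Wp p G) (halpha : 1 < alphaNum G) :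
    (∀ x : V, Wp p (G.induce (localSet G {x}))) ∧
      ∀ S : Set V, IndepSet G S → S.ncard < alphaNum G →
        Wp p (G.induce (localSet G S)) ∧
          (2 ≤ p → ∀ v : (localSet G S : Set V),
            ∃ u : (localSet G S : Set V), (G.induce (localSet G S)).Adj v u) := by
  have hlocal : ∀ S : Set V, IndepSet G S → S.ncard < alphaNum G →
      Wp p (G.induce (localSet G S)) ∧ (2 ≤ p → ∀ v : (localSet G S : Set V),
        ∃ u : (localSet G S : Set V), (G.induce (localSet G S)).Adj v u) := fun S hS hSα =>
    have hGS := hG.induce_localSet hp hS hSα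
    ⟨hGS, fun hp₂ v => hGS.exists_adj hp₂ v⟩
  refine ⟨fun x => (hlocal {x} (indepSet_singleton x) ?_).1, hlocal⟩
  rwa [Set.ncard_singleton]
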